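/- arXiv:2206.05968 — 6 statements merged into one kernel-verified Lean document; each statement's English description precedes it below -/
import Mathlib

section
/- Let M be a matroid with weight function w, and let C ⊆ A ⊆ E be a circuit contained in A. If e is an element of C of minimum weight among elements of C, then the weighted rank satisfies φ_w(A) = φ_w(A \ {e}). -/
open Classical Finset

/-- Weighted rank function of a matroid: maximum weight of an independent subset. -/
noncomputable def phi {α : Type*} (M : Matroid α) (w : α → ℝ) (A : Finset α) : ℝ :=
  sSup {x : ℝ | ∃ I : Finset α, ↑I ⊆ (A : Set α) ∧ M.Indep ↑I ∧ x = ∑ a ∈ I, w a}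

/-- A circuit: a minimal dependent set. -/
def IsCircuit {α : Type*} (M : Matroid α) (C : Set α) : Prop :=
  M.Dep C ∧ ∀ D ⊂ C, ¬ M.Dep D

/-! If `e ∈ I` lies on a circuit `C`, then `e ∈ cl(C \ {e})` but `e ∉ cl(I \ {e})`, so some
`b ∈ C \ {e}` lies outside `cl(I \ {e})` and `I - e + b` is independent. As `e` is lightest
on `C`, this exchange does not decrease the weight and avoids `e`, so dropping `e` from `A`
does not lower the weighted rank. -/

theorem IsCircuit.isCircuit {α : Type*} {M : Matroid α} {C : Set α} (hC : IsCircuit M C) :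
    M.IsCircuit C :=
  Matroid.isCircuit_iff_forall_ssubset.2 ⟨hC.1, fun _ hIC ↦
    (Matroid.not_dep_iff (hIC.subset.trans hC.1.subset_ground)).1 (hC.2 _ hIC)⟩

theorem Matroid.Indep.exists_insert_sdiff_indep_of_isCircuit {α : Type*} {M : Matroid α}
    {I C : Set α} {e : α} (hI : M.Indep I) (hC : M.IsCircuit C) (heI : e ∈ I) (heC : e ∈ C) :
    ∃ b ∈ C, b ≠ e ∧ b ∉ I ∧ M.Indep (insert b (I \ {e})) := by
  have hC_not_sub : ¬ C \ {e} ⊆ M.closure (I \ {e}) := fun h ↦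
    hI.notMem_closure_sdiff_of_mem heI
      (M.closure_subset_closure_of_subset_closure h (hC.mem_closure_sdiff_singleton_of_mem heC))
  obtain ⟨b, ⟨hbC, hbe⟩, hbcl⟩ := Set.not_subset.1 hC_not_sub
  have hbJ : b ∉ I \ {e} := fun h ↦ hbcl (M.mem_closure_of_mem h (hI.sdiff {e}).subset_ground)
  refine ⟨b, hbC, hbe, fun hbI ↦ hbJ ⟨hbI, hbe⟩, ?_⟩
  exact ((hI.sdiff {e}).insert_indep_iff_of_notMem hbJ).2 ⟨hC.subset_ground hbC, hbcl⟩

section WeightedRank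

variable {α : Type*} (M : Matroid α) (w : α → ℝ)

theorem phi_bddAbove (A : Finset α) :
    BddAbove {x : ℝ | ∃ I : Finset α, ↑I ⊆ (A : Set α) ∧ M.Indep ↑I ∧ x = ∑ a ∈ I, w a} := by
  refine (((A.powerset : Set (Finset α)).toFinite.image fun I ↦ ∑ a ∈ I, w a).subset ?_).bddAbove
  rintro x ⟨I, hIA, -, rfl⟩
  exact ⟨I, by simpa using hIA, rfl⟩

variable {M w}

theorem sum_le_phi {A I : Finset α} (hIA : I ⊆ A) (hI : M.Indep ↑I) :
    ∑ a ∈ I, w a ≤ phi M w A :=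
  le_csSup (phi_bddAbove M w A) ⟨I, coe_subset.2 hIA, hI, rfl⟩

theorem phi_le {A : Finset α} {r : ℝ} (h : ∀ I ⊆ A, M.Indep ↑I → ∑ a ∈ I, w a ≤ r) :
    phi M w A ≤ r := by
  refine csSup_le ⟨0, ∅, by simp, by simp, by simp⟩ ?_
  rintro x ⟨I, hIA, hI, rfl⟩
  exact h I (coe_subset.1 hIA) hI

theorem phi_mono {A B : Finset α} (hAB : A ⊆ B) : phi M w A ≤ phi M w B :=
  phi_le fun _ hIA hI ↦ sum_le_phi (hIA.trans hAB) hI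

end WeightedRank

theorem phi_erase_min_of_circuit_general {α : Type*} [DecidableEq α] (M : Matroid α) (w : α → ℝ)
    (A C : Finset α)
    (hCA : C ⊆ A) (hC : IsCircuit M ↑C)
    (e : α) (he : e ∈ C) (hmin : ∀ c ∈ C, w e ≤ w c) :
    phi M w A = phi M w (A.erase e) := by
  refine le_antisymm (phi_le fun I hIA hI ↦ ?_) (phi_mono (erase_subset e A))
  by_cases heI : e ∈ I
  · obtain ⟨b, hbC, hbe, hbI, hJ⟩ :=
      hI.exists_insert_sdiff_indep_of_isCircuit hC.isCircuit (mem_coe.2 heI) he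
    have hbJ : b ∉ I.erase e := fun h ↦ hbI (mem_of_mem_erase h)
    calc ∑ a ∈ I, w a = w e + ∑ a ∈ I.erase e, w a := (add_sum_erase I w heI).symm
      _ ≤ w b + ∑ a ∈ I.erase e, w a := by gcongr; exact hmin b hbC
      _ = ∑ a ∈ insert b (I.erase e), w a := (sum_insert hbJ).symm
      _ ≤ phi M w (A.erase e) := by
        refine sum_le_phi
          (insert_subset (mem_erase.2 ⟨hbe, hCA hbC⟩) (erase_subset_erase e hIA)) ?_
        simpa using hJ
  · exact sum_le_phi (subset_erase.2 ⟨hIA, heI⟩) hI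

theorem phi_erase_min_of_circuit {α : Type*} [DecidableEq α] (M : Matroid α) (w : α → ℝ)
    (hw : ∀ a, 0 ≤ w a) (A C : Finset α) (hA : (A : Set α) ⊆ M.E)
    (hCA : C ⊆ A) (hC : IsCircuit M ↑C)
    (e : α) (he : e ∈ C) (hmin : ∀ c ∈ C, w e ≤ w c) :
    phi M w A = phi M w (A.erase e) :=
  phi_erase_min_of_circuit_general M w A C hCA hC e he hmin
end

section
/- Let M be a matroid with weight function w, let A ⊆ E, and let i, j ∉ A be distinct elements such that A is independent but A ∪ {i} and A ∪ {j} are dependent. Let C₁ be the unique circuit contained in A ∪ {i} and C₂ the unique circuit contained in A ∪ {j}, with a ∈ C₁ and b ∈ C₂ minimum-weight elements. Then φ_w(A ∪ {i}) = φ_w(A) + w(i) − w(a) and φ_w(A ∪ {i,j}) ≤ φ_w(A) + w(i) + w(j) − w(a) − w(b). -/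
open Classical Finset

namespace PhiAux

variable {α : Type*} {M : Matroid α}

lemma circuit_diff_indep {C : Set α} (hC : IsCircuit M C) {x : α} (hx : x ∈ C) :
    M.Indep (C \ {x}) := by
  by_contra h
  have hss : C \ {x} ⊂ C := ⟨Set.diff_subset, fun hsub => (hsub hx).2 rfl⟩
  exact hC.2 (C \ {x}) hss ⟨h, (Set.diff_subset).trans hC.1.subset_ground⟩

lemma circuit_mem_closure {C : Set α} (hC : IsCircuit M C) {x : α} (hx : x ∈ C) :
    x ∈ M.closure (C \ {x}) := by
  have hI := circuit_diff_indep hC hx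
  have hdep : M.Dep (insert x (C \ {x})) := by
    rw [Set.insert_diff_singleton, Set.insert_eq_self.mpr hx]
    exact hC.1
  exact (hI.insert_dep_iff.mp hdep).1

lemma mem_circuit_of_subset_insert {A C : Set α} {x : α} (hA : M.Indep A)
    (hC : IsCircuit M C) (hCs : C ⊆ insert x A) : x ∈ C := by
  by_contra hxC
  have : C ⊆ A := fun c hc => ((hCs hc).resolve_left (fun h => hxC (h ▸ hc)))
  exact hC.1.not_indep (hA.subset this)

lemma indep_insert_diff {A : Set α} {x c : α} (hA : M.Indep A) (hx : x ∉ A)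
    (hxE : x ∈ M.E) {C : Set α} (hC : IsCircuit M C) (hCs : C ⊆ insert x A)
    (hc : c ∈ C) : M.Indep (insert x A \ {c}) := by
  have hxC : x ∈ C := mem_circuit_of_subset_insert hA hC hCs
  rcases eq_or_ne c x with rfl | hcx
  · rwa [Set.insert_diff_self_of_notMem hx]
  have hcA : c ∈ A := ((hCs hc).resolve_left hcx)
  by_contra hdep'
  have hsubE : insert x A \ {c} ⊆ M.E :=
    (Set.diff_subset).trans (Set.insert_subset hxE hA.subset_ground)
  have hdep : M.Dep (insert x A \ {c}) := ⟨hdep', hsubE⟩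
  have hB : M.Indep (A \ {c}) := hA.subset Set.diff_subset
  have hxB : x ∉ A \ {c} := fun h => hx h.1
  have heq : insert x A \ {c} = insert x (A \ {c}) := by
    rw [Set.insert_diff_of_notMem _ (by simpa using (Ne.symm hcx))]
  rw [heq] at hdep
  have hxcl : x ∈ M.closure (A \ {c}) := (hB.insert_dep_iff.mp hdep).1
  have hclins : M.closure (insert x (A \ {c})) = M.closure (A \ {c}) :=
    Matroid.closure_insert_eq_of_mem_closure hxcl
  have hCsub : C \ {c} ⊆ insert x (A \ {c}) := by
    rintro y ⟨hyC, hyc⟩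
    rcases hCs hyC with rfl | hyA
    · exact Set.mem_insert _ _
    · exact Set.mem_insert_of_mem _ ⟨hyA, hyc⟩
  have : c ∈ M.closure (A \ {c}) := by
    rw [← hclins]
    exact M.closure_subset_closure hCsub (circuit_mem_closure hC hc)
  exact hA.notMem_closure_diff_of_mem hcA this

lemma circuit_elim {C₁ C₂ : Set α} (h1 : IsCircuit M C₁) (h2 : IsCircuit M C₂)
    (hne : C₁ ≠ C₂) {c : α} (hc1 : c ∈ C₁) (hc2 : c ∈ C₂) :
    ¬ M.Indep ((C₁ ∪ C₂) \ {c}) := by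
  intro hX
  have hns : ¬ C₁ ⊆ C₂ := by
    intro h
    rcases h.eq_or_ssubset with h' | h'
    · exact hne h'
    · exact h2.2 C₁ h' h1.1
  obtain ⟨e, heC₁, heC₂⟩ := Set.not_subset.mp hns
  have hec : e ≠ c := fun h => heC₂ (h ▸ hc2)
  have heX : e ∈ (C₁ ∪ C₂) \ {c} := ⟨Or.inl heC₁, hec⟩
  have h1sub : C₂ \ {c} ⊆ ((C₁ ∪ C₂) \ {c}) \ {e} := by
    rintro y ⟨hy, hyc⟩
    refine ⟨⟨Or.inr hy, hyc⟩, fun h => heC₂ ?_⟩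
    have : y = e := Set.mem_singleton_iff.mp h
    rwa [this] at hy
  have hccl : c ∈ M.closure (((C₁ ∪ C₂) \ {c}) \ {e}) :=
    M.closure_subset_closure h1sub (circuit_mem_closure h2 hc2)
  have h2sub : C₁ \ {e} ⊆ insert c (((C₁ ∪ C₂) \ {c}) \ {e}) := by
    rintro y ⟨hy, hye⟩
    rcases eq_or_ne y c with rfl | hyc
    · exact Set.mem_insert _ _
    · exact Set.mem_insert_of_mem _ ⟨⟨Or.inl hy, hyc⟩, hye⟩
  have : e ∈ M.closure (((C₁ ∪ C₂) \ {c}) \ {e}) := by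
    rw [← Matroid.closure_insert_eq_of_mem_closure hccl]
    exact M.closure_subset_closure h2sub (circuit_mem_closure h1 heC₁)
  exact hX.notMem_closure_diff_of_mem heX this

end PhiAux

theorem phi_insert_formula {α : Type*} [DecidableEq α] (M : Matroid α) (w : α → ℝ)
    (hw : ∀ a, 0 ≤ w a) (A : Finset α) (i j : α) (hij : i ≠ j)
    (hi : i ∉ A) (hj : j ∉ A)
    (hAE : (A : Set α) ⊆ M.E) (hiE : i ∈ M.E) (hjE : j ∈ M.E)
    (hA : M.Indep ↑A)
    (hAi : M.Dep ↑(insert i A)) (hAj : M.Dep ↑(insert j A))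
    (C₁ C₂ : Finset α)
    (hC₁ : IsCircuit M ↑C₁) (hC₁A : C₁ ⊆ insert i A)
    (hC₂ : IsCircuit M ↑C₂) (hC₂A : C₂ ⊆ insert j A)
    (a : α) (ha : a ∈ C₁) (hamin : ∀ c ∈ C₁, w a ≤ w c)
    (b : α) (hb : b ∈ C₂) (hbmin : ∀ c ∈ C₂, w b ≤ w c) :
    phi M w (insert i A) = phi M w A + w i - w a ∧
    phi M w (insert j (insert i A)) ≤ phi M w A + w i + w j - w a - w b := by
  classical
  -- generic facts about the sup sets
  have hmemS : ∀ (B I : Finset α), ↑I ⊆ (B : Set α) → M.Indep ↑I →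
      (∑ a ∈ I, w a) ∈ {x : ℝ | ∃ I : Finset α, ↑I ⊆ (B : Set α) ∧ M.Indep ↑I ∧
        x = ∑ a ∈ I, w a} := fun B I h1 h2 => ⟨I, h1, h2, rfl⟩
  have hbound : ∀ (B : Finset α) (x : ℝ),
      x ∈ {x : ℝ | ∃ I : Finset α, ↑I ⊆ (B : Set α) ∧ M.Indep ↑I ∧ x = ∑ a ∈ I, w a} →
      x ≤ ∑ a ∈ B, w a := by
    rintro B x ⟨I, hIB, -, rfl⟩
    exact Finset.sum_le_sum_of_subset_of_nonneg (by exact_mod_cast hIB)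
      (fun c _ _ => hw c)
  have hne : ∀ B : Finset α, {x : ℝ | ∃ I : Finset α, ↑I ⊆ (B : Set α) ∧ M.Indep ↑I ∧
      x = ∑ a ∈ I, w a}.Nonempty :=
    fun B => ⟨0, ∅, by simp, by simpa using M.empty_indep, by simp⟩
  have hbdd : ∀ B : Finset α, BddAbove {x : ℝ | ∃ I : Finset α, ↑I ⊆ (B : Set α) ∧
      M.Indep ↑I ∧ x = ∑ a ∈ I, w a} := fun B => ⟨_, fun x hx => hbound B x hx⟩
  -- phi A = ∑_A w
  have hphiA : phi M w A = ∑ a ∈ A, w a := by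
    refine le_antisymm (csSup_le (hne A) (hbound A)) (le_csSup (hbdd A) ?_)
    exact hmemS A A subset_rfl hA
  have hC₁sub : (C₁ : Set α) ⊆ insert i (A : Set α) := by
    simpa [Finset.coe_insert] using Finset.coe_subset.mpr hC₁A
  have hC₂sub : (C₂ : Set α) ⊆ insert j (A : Set α) := by
    simpa [Finset.coe_insert] using Finset.coe_subset.mpr hC₂A
  have hiC₁ : i ∈ C₁ := by
    exact_mod_cast PhiAux.mem_circuit_of_subset_insert hA hC₁ hC₁sub
  have hjC₂ : j ∈ C₂ := by
    exact_mod_cast PhiAux.mem_circuit_of_subset_insert hA hC₂ hC₂sub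
  have hwa_le_wi : w a ≤ w i := hamin i hiC₁
  have hwb_le_wj : w b ≤ w j := hbmin j hjC₂
  have haiA : a ∈ insert i A := hC₁A ha
  have hbjA : b ∈ insert j A := hC₂A hb
  -- sums
  have hsum_iA : ∑ x ∈ insert i A, w x = w i + ∑ x ∈ A, w x := Finset.sum_insert hi
  -- a helper: if I ⊆ B and c ∈ B \ I then ∑ I ≤ ∑ B - w c
  have herase1 : ∀ (B I : Finset α) (c : α), I ⊆ B → c ∈ B → c ∉ I →
      ∑ x ∈ I, w x ≤ (∑ x ∈ B, w x) - w c := by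
    intro B I c hIB hcB hcI
    have hIsub : I ⊆ B.erase c := fun y hy =>
      Finset.mem_erase.mpr ⟨fun h => hcI (h ▸ hy), hIB hy⟩
    have := Finset.sum_le_sum_of_subset_of_nonneg hIsub (fun x _ _ => hw x)
    have herase : ∑ x ∈ B.erase c, w x = (∑ x ∈ B, w x) - w c := by
      rw [Finset.sum_erase_eq_sub hcB]
    linarith
  have herase2 : ∀ (B I : Finset α) (c d : α), I ⊆ B → c ∈ B → c ∉ I → d ∈ B → d ∉ I →
      c ≠ d → ∑ x ∈ I, w x ≤ (∑ x ∈ B, w x) - w c - w d := by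
    intro B I c d hIB hcB hcI hdB hdI hcd
    have hIsub : I ⊆ B.erase c := fun y hy =>
      Finset.mem_erase.mpr ⟨fun h => hcI (h ▸ hy), hIB hy⟩
    have hdB' : d ∈ B.erase c := Finset.mem_erase.mpr ⟨fun h => hcd h.symm, hdB⟩
    have h1 := herase1 (B.erase c) I d hIsub hdB' hdI
    have herase : ∑ x ∈ B.erase c, w x = (∑ x ∈ B, w x) - w c := by
      rw [Finset.sum_erase_eq_sub hcB]
    linarith
  -- circuits are not contained in independent sets
  have hnotsub : ∀ (I : Finset α) (C : Finset α), IsCircuit M (↑C) → M.Indep ↑I →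
      ∃ c ∈ C, c ∉ I := by
    intro I C hC hI
    by_contra h
    push_neg at h
    have : (C : Set α) ⊆ ↑I := by exact_mod_cast Finset.coe_subset.mpr (fun y hy => h y hy)
    exact hC.1.not_indep (hI.subset this)
  -- Part 1
  have hpart1 : phi M w (insert i A) = (∑ x ∈ A, w x) + w i - w a := by
    refine le_antisymm (csSup_le (hne _) ?_) (le_csSup (hbdd _) ?_)
    · rintro x ⟨I, hIsub, hIind, rfl⟩
      have hIB : I ⊆ insert i A := by exact_mod_cast hIsub
      obtain ⟨c, hcC, hcI⟩ := hnotsub I C₁ hC₁ hIind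
      have h := herase1 (insert i A) I c hIB (hC₁A hcC) hcI
      have := hamin c hcC
      rw [hsum_iA] at h
      linarith
    · -- the witness (insert i A).erase a
      have hind : M.Indep ((insert i (A : Set α)) \ {a}) :=
        PhiAux.indep_insert_diff hA hi hiE hC₁ hC₁sub (by exact_mod_cast ha)
      have hcoe : ((( insert i A).erase a : Finset α) : Set α)
          = (insert i (A : Set α)) \ {a} := by
        rw [Finset.coe_erase, Finset.coe_insert]
      refine ⟨(insert i A).erase a, ?_, ?_, ?_⟩
      · rw [Finset.coe_erase]; exact Set.diff_subset
      · rw [hcoe]; exact hind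
      · rw [Finset.sum_erase_eq_sub haiA, hsum_iA]; ring
  refine ⟨by rw [hpart1, hphiA], ?_⟩
  -- Part 2
  have hC₁set : (C₁ : Set α) ⊆ insert j (insert i (A : Set α)) :=
    hC₁sub.trans (Set.subset_insert _ _)
  have hsum_jiA : ∑ x ∈ insert j (insert i A), w x
      = w j + w i + ∑ x ∈ A, w x := by
    rw [Finset.sum_insert (by simp [hj, Ne.symm hij]), hsum_iA]; ring
  rw [hphiA]
  refine csSup_le (hne _) ?_
  rintro x ⟨I, hIsub, hIind, rfl⟩
  have hIB : I ⊆ insert j (insert i A) := by exact_mod_cast hIsub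
  have hmemT1 : ∀ c ∈ C₁, c ∈ insert j (insert i A) := fun c hc =>
    Finset.mem_insert_of_mem (hC₁A hc)
  have hmemT2 : ∀ d ∈ C₂, d ∈ insert j (insert i A) := fun d hd => by
    rcases Finset.mem_insert.mp (hC₂A hd) with h | h
    · exact Finset.mem_insert.mpr (Or.inl h)
    · exact Finset.mem_insert_of_mem (Finset.mem_insert_of_mem h)
  have hC1ne2 : (C₁ : Set α) ≠ (C₂ : Set α) := by
    intro h
    have hjC₁ : j ∈ (C₁ : Set α) := by
      rw [h]; exact_mod_cast hjC₂
    rcases hC₁sub hjC₁ with h' | h'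
    · exact hij (h'.symm ▸ rfl) |>.elim
    · exact hj (by exact_mod_cast h')
  have key : ∃ c d : α, c ∈ insert j (insert i A) ∧ c ∉ I ∧ d ∈ insert j (insert i A)
      ∧ d ∉ I ∧ c ≠ d ∧ w a ≤ w c ∧ w b ≤ w d := by
    by_cases hex : ∃ c ∈ C₁, ∃ d ∈ C₂, c ∉ I ∧ d ∉ I ∧ c ≠ d
    · obtain ⟨c, hcC, d, hdC, hcI, hdI, hcd⟩ := hex
      exact ⟨c, d, hmemT1 c hcC, hcI, hmemT2 d hdC, hdI, hcd, hamin c hcC, hbmin d hdC⟩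
    · exfalso
      push_neg at hex
      obtain ⟨c, hcC, hcI⟩ := hnotsub I C₁ hC₁ hIind
      obtain ⟨d, hdC, hdI⟩ := hnotsub I C₂ hC₂ hIind
      have hcd : c = d := hex c hcC d hdC hcI hdI
      subst hcd
      have hsubI : ((C₁ : Set α) ∪ (C₂ : Set α)) \ {c} ⊆ (I : Set α) := by
        rintro y ⟨hy | hy, hyc⟩
        · by_contra hyI
          exact hyc (hex y (by exact_mod_cast hy) c hdC hyI hdI)
        · by_contra hyI
          exact hyc ((hex c hcC y (by exact_mod_cast hy) hcI hyI).symm)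
      exact PhiAux.circuit_elim hC₁ hC₂ hC1ne2 (by exact_mod_cast hcC)
        (by exact_mod_cast hdC) (hIind.subset hsubI)
  obtain ⟨c, d, hcB, hcI, hdB, hdI, hcd, hac, hbd⟩ := key
  have := herase2 (insert j (insert i A)) I c d hIB hcB hcI hdB hdI hcd
  rw [hsum_jiA] at this
  linarith
end

section
/- Let B be a base of a matroid M obtained by the following procedure: starting from the full ground set, repeatedly pick a circuit of the current set and remove a minimum-weight element of it, until no circuit remains. Then B is a maximum-weight base: for every base B' of M, ∑_{e∈B'} w(e) ≤ ∑_{e∈B} w(e). -/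
open Classical Finset

/-!
Each removal keeps the current set spanning, since the removed element lies in the closure of
the rest of its circuit; at the end no circuit is left, so the final set is an independent
spanning set, i.e. a base. For optimality, fix a base `B'` and carry along an independent subset
of the current set weighing at least `w(B')`. When the removed element `e` of the circuit `C` lies
in it, some `f ∈ C \ {e}` is outside the closure of the rest of it (otherwise `e`, spanned by
`C \ {e}`, would be spanned too), and trading `e` for `f` keeps it independent without losing
weight because `w e ≤ w f`.
-/

lemma isCircuit_iff_matroid_isCircuit {α : Type*} {M : Matroid α} {C : Set α} :
    IsCircuit M C ↔ M.IsCircuit C :=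
  minimal_iff_forall_lt.symm

namespace Matroid

variable {α : Type*} {M : Matroid α}

lemma IsCircuit.closure_sdiff_singleton_of_subset {C X : Set α} {e : α} (hC : M.IsCircuit C)
    (hCX : C ⊆ X) (heC : e ∈ C) : M.closure (X \ {e}) = M.closure X :=
  closure_sdiff_singleton_eq_closure <| M.closure_subset_closure
    (Set.sdiff_subset_sdiff_left hCX) (hC.mem_closure_sdiff_singleton_of_mem heC)

lemma Indep.exists_insert_sdiff_singleton_indep {I C : Set α} {e : α} (hI : M.Indep I)
    (heI : e ∈ I) (hC : M.IsCircuit C) (heC : e ∈ C) :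
    ∃ f ∈ C, f ≠ e ∧ f ∉ I ∧ M.Indep (insert f (I \ {e})) := by
  have hnot : ¬ C \ {e} ⊆ M.closure (I \ {e}) := fun hsub ↦
    hI.notMem_closure_sdiff_of_mem heI <|
      M.closure_subset_closure_of_subset_closure hsub (hC.mem_closure_sdiff_singleton_of_mem heC)
  obtain ⟨f, ⟨hfC, hfe⟩, hfcl⟩ := Set.not_subset.mp hnot
  have hfI : f ∉ I \ {e} := fun hf ↦
    hfcl (M.subset_closure _ (Set.sdiff_subset.trans hI.subset_ground) hf)
  refine ⟨f, hfC, hfe, fun hf ↦ hfI ⟨hf, hfe⟩, ?_⟩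
  exact (hI.subset Set.sdiff_subset).insert_indep_iff_of_notMem hfI |>.mpr
    ⟨hC.subset_ground hfC, hfcl⟩

lemma exists_indep_subset_erase_sum_le {β : Type*} [AddCommMonoid β] [PartialOrder β]
    [IsOrderedAddMonoid β] [DecidableEq α] (w : α → β) {I C X : Finset α} {e : α}
    (hI : M.Indep ↑I) (hIX : I ⊆ X) (hC : M.IsCircuit ↑C) (hCX : C ⊆ X) (heC : e ∈ C)
    (hmin : ∀ c ∈ C, w e ≤ w c) :
    ∃ J ⊆ X.erase e, M.Indep ↑J ∧ ∑ a ∈ I, w a ≤ ∑ a ∈ J, w a := by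
  by_cases heI : e ∈ I
  · obtain ⟨f, hfC, hfe, hfI, hindep⟩ := hI.exists_insert_sdiff_singleton_indep heI hC heC
    have hfI' : f ∉ I.erase e := fun hf ↦ hfI (mem_of_mem_erase hf)
    refine ⟨insert f (I.erase e), insert_subset (mem_erase.mpr ⟨hfe, hCX hfC⟩)
      (erase_subset_erase e hIX), by simpa using hindep, ?_⟩
    rw [sum_insert hfI', ← add_sum_erase I w heI]
    exact add_le_add_left (hmin f hfC) _
  · exact ⟨I, subset_erase.mpr ⟨hIX, heI⟩, hI, le_rfl⟩

lemma indep_of_forall_finset_not_isCircuit [Finite α] {X : Set α} (hX : X ⊆ M.E)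
    (h : ∀ C : Finset α, ↑C ⊆ X → ¬ M.IsCircuit ↑C) : M.Indep X := by
  refine (indep_iff_forall_subset_not_isCircuit hX).mpr fun C hCX ↦ ?_
  simpa using h C.toFinite.toFinset (by simpa using hCX)

end Matroid

theorem greedy_removal_max_base {α : Type*} [Fintype α] [DecidableEq α]
    (M : Matroid α) (hE : M.E = Set.univ) (w : α → ℝ) (hw : ∀ a, 0 ≤ w a)
    (n : ℕ) (S : ℕ → Finset α) (hS0 : S 0 = Finset.univ)
    (hstep : ∀ k < n, ∃ (C : Finset α) (e : α), IsCircuit M ↑C ∧ C ⊆ S k ∧ e ∈ C ∧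
      (∀ c ∈ C, w e ≤ w c) ∧ S (k + 1) = (S k).erase e)
    (hend : ∀ C : Finset α, C ⊆ S n → ¬ IsCircuit M ↑C) :
    M.IsBase ↑(S n) ∧ ∀ B' : Finset α, M.IsBase ↑B' → ∑ e ∈ B', w e ≤ ∑ e ∈ S n, w e := by
  have hspan : ∀ k ≤ n, M.closure ↑(S k) = M.E := by
    intro k hk
    induction k with
    | zero => simp [hS0]
    | succ k ih =>
      obtain ⟨C, e, hC, hCS, heC, -, hSe⟩ := hstep k hk
      rw [hSe, coe_erase, ← ih (by omega)]
      exact (isCircuit_iff_matroid_isCircuit.mp hC).closure_sdiff_singleton_of_subset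
        (mod_cast hCS) heC
  have hindep : M.Indep ↑(S n) :=
    Matroid.indep_of_forall_finset_not_isCircuit (by simp [hE]) fun C hC hCirc ↦
      hend C (by simpa using hC) (isCircuit_iff_matroid_isCircuit.mpr hCirc)
  refine ⟨hindep.isBase_of_ground_subset_closure (hspan n le_rfl).ge, fun B' hB' ↦ ?_⟩
  have hweight : ∀ k ≤ n, ∃ J ⊆ S k, M.Indep ↑J ∧ ∑ e ∈ B', w e ≤ ∑ e ∈ J, w e := by
    intro k hk
    induction k with
    | zero => exact ⟨B', hS0 ▸ subset_univ B', hB'.indep, le_rfl⟩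
    | succ k ih =>
      obtain ⟨J, hJS, hJ, hB'J⟩ := ih (by omega)
      obtain ⟨C, e, hC, hCS, heC, hmin, hSe⟩ := hstep k hk
      obtain ⟨J', hJ'S, hJ', hJJ'⟩ := Matroid.exists_indep_subset_erase_sum_le w hJ hJS
        (isCircuit_iff_matroid_isCircuit.mp hC) hCS heC hmin
      exact ⟨J', hSe ▸ hJ'S, hJ', hB'J.trans hJJ'⟩
  obtain ⟨J, hJS, -, hB'J⟩ := hweight n le_rfl
  exact hB'J.trans (sum_le_sum_of_subset_of_nonneg hJS fun a _ _ ↦ hw a)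
end

section
/- Let B be a base of a matroid M such that no element of B is a minimum-weight element of any circuit of M that it belongs to (i.e., for every circuit C and every e ∈ B ∩ C, there exists c ∈ C with w(c) < w(e)). Then B is a maximum-weight base. -/
open Classical Finset

/-! Given a base `B' ≠ B`, pick `f ∈ B \ B'` and a lightest element `c` of the fundamental circuit
of `f` in `B'`. The hypothesis on `B` forces `c ∉ B`, hence `c ∈ B'`, and `w c < w f`; exchanging
`c` for `f` gives a base at least as heavy as `B'` that shares one more element with `B`, so
induction on `#(B' \ B)` concludes. -/

theorem isCircuit_of_matroid_isCircuit {α : Type*} {M : Matroid α} {C : Set α}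
    (hC : M.IsCircuit C) : IsCircuit M C :=
  ⟨hC.dep, fun _ hDC hD ↦ hD.not_indep (hC.ssubset_indep hDC)⟩

theorem Matroid.IsBase.exchange_isBase_of_mem_fundCircuit {α : Type*} {M : Matroid α}
    {B : Set α} {e f : α} (hB : M.IsBase B) (hf : f ∈ M.E \ B) (heB : e ∈ B)
    (he : e ∈ M.fundCircuit f B) : M.IsBase (insert f B \ {e}) :=
  hB.exchange_isBase_of_indep' heB hf.2
    ((hB.indep.mem_fundCircuit_iff (by rw [hB.closure_eq]; exact hf.1) hf.2).1 he)

theorem Finset.sum_le_sum_erase_insert {ι β : Type*} [AddCommMonoid β] [PartialOrder β]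
    [IsOrderedCancelAddMonoid β] {s : Finset ι} {w : ι → β} {c f : ι} (hf : f ∉ s)
    (hc : c ∈ s) (hw : w c ≤ w f) : ∑ x ∈ s, w x ≤ ∑ x ∈ (insert f s).erase c, w x := by
  have hsum := sum_erase_add (insert f s) w (mem_insert_of_mem hc)
  rw [sum_insert hf] at hsum
  refine le_of_add_le_add_left (a := w f) ?_
  rw [← hsum, add_comm (w f)]
  gcongr

theorem Finset.card_erase_insert_sdiff_lt {ι : Type*} {s t : Finset ι} {c f : ι} (hf : f ∈ t)
    (hc : c ∈ s) (hct : c ∉ t) : #((insert f s).erase c \ t) < #(s \ t) := by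
  rw [erase_sdiff_comm, insert_sdiff_of_mem _ hf]
  exact card_erase_lt_of_mem (mem_sdiff.2 ⟨hc, hct⟩)

theorem exists_lighter_exchange {α : Type*} {M : Matroid α} {w : α → ℝ} {B B' : Finset α}
    (hmin : ∀ C : Set α, IsCircuit M C → ∀ e ∈ B, e ∈ C → ∃ c ∈ C, w c < w e)
    (hB' : M.IsBase ↑B') {f : α} (hfE : f ∈ M.E) (hfB : f ∈ B) (hfB' : f ∉ B') :
    ∃ c ∈ B', c ∉ B ∧ w c < w f ∧ M.IsBase (insert f ↑B' \ {c}) := by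
  set C := M.fundCircuit f B'
  have hC := isCircuit_of_matroid_isCircuit (hB'.fundCircuit_isCircuit hfE (by simpa))
  have hCfin : C.Finite := (B'.finite_toSet.insert f).subset (M.fundCircuit_subset_insert f B')
  obtain ⟨c, hcC, hc_min⟩ := C.exists_min_image w hCfin ⟨f, M.mem_fundCircuit f B'⟩
  have hcB : c ∉ B := fun hcB ↦
    let ⟨d, hdC, hdc⟩ := hmin C hC c hcB hcC
    (hc_min d hdC).not_gt hdc
  have hcB' : c ∈ B' := by
    have hcf : c ≠ f := fun h ↦ hcB (h ▸ hfB)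
    simpa [hcf] using M.fundCircuit_subset_insert f B' hcC
  obtain ⟨d, hdC, hdf⟩ := hmin C hC f hfB (M.mem_fundCircuit f B')
  exact ⟨c, hcB', hcB, (hc_min d hdC).trans_lt hdf,
    hB'.exchange_isBase_of_mem_fundCircuit ⟨hfE, by simpa⟩ hcB' hcC⟩

theorem base_no_min_in_circuit_is_max_general {α : Type*} (M : Matroid α) (w : α → ℝ)
    (B : Finset α) (hB : M.IsBase ↑B)
    (hmin : ∀ C : Set α, IsCircuit M C → ∀ e ∈ B, e ∈ C → ∃ c ∈ C, w c < w e) :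
    ∀ B' : Finset α, M.IsBase ↑B' → ∑ e ∈ B', w e ≤ ∑ e ∈ B, w e := by
  intro B' hB'
  induction hn : #(B' \ B) using Nat.strong_induction_on generalizing B' with
  | _ n ih =>
    by_cases hBB' : B ⊆ B'
    · rw [coe_inj.1 (hB.eq_of_subset_isBase hB' (coe_subset.2 hBB'))]
    obtain ⟨f, hfB, hfB'⟩ := not_subset.1 hBB'
    obtain ⟨c, hcB', hcB, hwc, hexch⟩ :=
      exists_lighter_exchange hmin hB' (hB.subset_ground (mem_coe.2 hfB)) hfB hfB'
    calc ∑ e ∈ B', w e ≤ ∑ e ∈ (insert f B').erase c, w e :=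
          sum_le_sum_erase_insert hfB' hcB' hwc.le
      _ ≤ ∑ e ∈ B, w e :=
          ih _ (hn ▸ card_erase_insert_sdiff_lt hfB hcB' hcB) _ (by simpa using hexch) rfl

theorem base_no_min_in_circuit_is_max {α : Type*} (M : Matroid α) (w : α → ℝ)
    (hw : ∀ a, 0 ≤ w a) (B : Finset α) (hB : M.IsBase ↑B)
    (hmin : ∀ C : Set α, IsCircuit M C → ∀ e ∈ B, e ∈ C → ∃ c ∈ C, w c < w e) :
    ∀ B' : Finset α, M.IsBase ↑B' → ∑ e ∈ B', w e ≤ ∑ e ∈ B, w e :=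
  base_no_min_in_circuit_is_max_general M w B hB hmin
end

section
/- Let M be a linear matroid over F₂ on ground set [n] with non-negative integer weight function w. Then the weighted rank function φ_w is entropic: there exist jointly distributed random variables Y₁,...,Yₙ such that for every nonempty A ⊆ [n], the joint entropy H((Y_e)_{e∈A}) equals φ_w(A). -/
open Classical Finset Real

/-- Probability of an event under a weight function on a finite sample space. -/
noncomputable def Pr {Ω : Type*} [Fintype Ω] (p : Ω → ℝ) (E : Ω → Prop) : ℝ :=
  ∑ ω, if E ω then p ω else 0

/-- Shannon entropy (base 2) of a finite-valued random variable. -/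
noncomputable def entH {Ω S : Type*} [Fintype Ω] [Fintype S] (p : Ω → ℝ) (f : Ω → S) : ℝ :=
  -∑ s : S, Pr p (fun ω => f ω = s) * Real.logb 2 (Pr p (fun ω => f ω = s))

/-- Weighted rank function of the binary linear matroid with columns `v`. -/
noncomputable def phiLin {n m : ℕ} (v : Fin n → Fin m → ZMod 2) (w : Fin n → ℕ)
    (A : Finset (Fin n)) : ℝ :=
  sSup {x : ℝ | ∃ I : Finset (Fin n), I ⊆ A ∧
    LinearIndependent (ZMod 2) (fun i : I => v i) ∧ x = ∑ e ∈ I, (w e : ℝ)}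

/-!
Let `x` be uniform on `(𝔽₂^m)^W` with `W = max w` and put `Y_e = (⟨v_e, x_j⟩)_{j < w e}`. For each
`A` the joint variable `(Y_e)_{e ∈ A}` is a linear image of `x`, hence uniform on its range, and
reading the range layer by layer gives `H = ∑_{j < W} rank {v_e | e ∈ A, j < w e}`.
This sum is also `φ_w(A)`: an independent `I ⊆ A` has `∑_{e ∈ I} w e = ∑_j #{e ∈ I | j < w e}`,
each term bounded by the rank of the `j`-th superlevel set of `A`, and extending bases down the
decreasing chain of superlevel sets yields one `I` that is a basis of every level at once.
-/

section Entropy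

lemma entH_comp_equiv {Ω₁ Ω₂ S : Type*} [Fintype Ω₁] [Fintype Ω₂] [Fintype S]
    (q : Ω₁ ≃ Ω₂) (p : Ω₂ → ℝ) (f : Ω₂ → S) :
    entH (fun ω => p (q ω)) (fun ω => f (q ω)) = entH p f := by
  simp only [entH, Pr]
  congr 1
  refine sum_congr rfl fun s _ => ?_
  rw [q.sum_comp (fun ω => if f ω = s then p ω else 0)]

lemma entH_equiv_comp {Ω S S' : Type*} [Fintype Ω] [Fintype S] [Fintype S']
    (ψ : S ≃ S') (p : Ω → ℝ) (f : Ω → S) :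
    entH p (fun ω => ψ (f ω)) = entH p f := by
  simp only [entH, ← ψ.eq_symm_apply]
  rw [ψ.symm.sum_comp (fun s => Pr p (fun ω => f ω = s) * logb 2 (Pr p (fun ω => f ω = s)))]

lemma entH_eq_logb_card {Ω S : Type*} [Fintype Ω] [Fintype S] (p : Ω → ℝ) (f : Ω → S)
    (R : Finset S) (hR : ∀ s, Pr p (fun ω => f ω = s) = if s ∈ R then (#R : ℝ)⁻¹ else 0) :
    entH p f = logb 2 #R := by
  have hterm : ∀ s, Pr p (fun ω => f ω = s) * logb 2 (Pr p (fun ω => f ω = s))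
      = if s ∈ R then -((#R : ℝ)⁻¹ * logb 2 #R) else 0 := by
    intro s
    rw [hR]
    split_ifs <;> simp [logb_inv]
  rw [entH, sum_congr rfl fun s _ => hterm s, sum_ite_mem, univ_inter, sum_const, nsmul_eq_mul,
    mul_neg, neg_neg, ← mul_assoc]
  rcases (Nat.cast_nonneg (α := ℝ) #R).eq_or_lt with h | h
  · simp [← h]
  · rw [mul_inv_cancel₀ h.ne', one_mul]

lemma entH_uniform_eq_logb_card_range {G S F : Type*} [AddGroup G] [Fintype G] [AddMonoid S]
    [Fintype S] [FunLike F G S] [AddMonoidHomClass F G S] (f : F) :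
    entH (fun _ => (Fintype.card G : ℝ)⁻¹) f = logb 2 (Nat.card (Set.range f)) := by
  set R := univ.image f
  have hfiber : ∀ s ∈ R, #{g | f g = s} * #R = Fintype.card G := by
    intro s hs
    rw [← card_univ, card_eq_sum_card_image f univ, mul_comm, ← smul_eq_mul, ← sum_const]
    refine sum_congr rfl fun t ht => ?_
    exact AddMonoidHom.card_fiber_eq_of_mem_range f (by simpa [R] using hs) (by simpa [R] using ht)
  rw [Nat.card_eq_card_toFinset, Set.toFinset_range]
  refine entH_eq_logb_card _ _ R fun s => ?_
  rw [Pr, ← sum_filter, sum_const, nsmul_eq_mul]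
  split_ifs with hs
  · have hpos : (#{g | f g = s} : ℝ) ≠ 0 := by
      obtain ⟨g, -, rfl⟩ := mem_image.mp hs
      exact Nat.cast_ne_zero.mpr (card_ne_zero.mpr ⟨g, by simp⟩)
    rw [← hfiber s hs]
    push_cast
    field_simp
  · rw [filter_false_of_mem fun g _ (hg : f g = s) => hs (hg ▸ mem_image_of_mem f (mem_univ g))]
    simp

lemma exists_fin_model {ι Ω : Type*} [DecidableEq ι] [Fintype Ω] {S : ι → Type*}
    [∀ i, Fintype (S i)]
    (p : Ω → ℝ) (hp0 : ∀ ω, 0 ≤ p ω) (hp1 : ∑ ω, p ω = 1) (Z : ∀ i, Ω → S i) :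
    ∃ (N : ℕ) (q : Fin N → ℝ) (k : ι → ℕ) (Y : ∀ i, Fin N → Fin (k i)),
      (∀ ω, 0 ≤ q ω) ∧ (∑ ω, q ω = 1) ∧
      ∀ A : Finset ι, entH q (fun ω (e : A) => Y e ω) = entH p (fun ω (e : A) => Z e ω) := by
  let σ := (Fintype.equivFin Ω).symm
  let τ := fun i => Fintype.equivFin (S i)
  refine ⟨Fintype.card Ω, fun ω => p (σ ω), fun i => Fintype.card (S i),
    fun i ω => τ i (Z i (σ ω)), fun ω => hp0 _, ?_, fun A => ?_⟩
  · rw [σ.sum_comp p, hp1]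
  · exact (entH_equiv_comp (Equiv.piCongrRight fun e : A => τ e) (fun ω => p (σ ω))
      (fun ω (e : A) => Z e (σ ω))).trans (entH_comp_equiv σ p fun x (e : A) => Z e x)

end Entropy

lemma sum_eq_sum_range_card_filter_lt {ι : Type*} (I : Finset ι) (w : ι → ℕ) (W : ℕ)
    (hW : ∀ e ∈ I, w e ≤ W) : ∑ e ∈ I, w e = ∑ j ∈ range W, #{e ∈ I | j < w e} := by
  simp only [card_filter]
  rw [sum_comm]
  refine sum_congr rfl fun e he => ?_
  have hfilter : {j ∈ range W | j < w e} = range (w e) := by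
    ext j
    simp only [mem_filter, mem_range]
    have := hW e he
    omega
  rw [← card_filter, hfilter, card_range]

section SpanFinrank

variable {ι K V : Type*} [Field K] [AddCommGroup V] [Module K V] {v : ι → V} {s t : Finset ι}

variable (K) in
/-- The rank of `s` in the matroid represented by the family `v`. -/
noncomputable def spanFinrank (v : ι → V) (s : Finset ι) : ℕ :=
  Module.finrank K (Submodule.span K (v '' s))

@[simp]
lemma spanFinrank_empty : spanFinrank K v ∅ = 0 := by
  rw [spanFinrank, coe_empty, Set.image_empty, Submodule.span_empty, finrank_bot]

lemma spanFinrank_mono (hst : s ⊆ t) : spanFinrank K v s ≤ spanFinrank K v t := by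
  have : FiniteDimensional K (Submodule.span K (v '' t)) :=
    FiniteDimensional.span_of_finite K (t.finite_toSet.image v)
  exact Submodule.finrank_mono (Submodule.span_mono (Set.image_mono (coe_subset.mpr hst)))

lemma LinearIndepOn.spanFinrank_eq_card (hs : LinearIndepOn K v s) :
    spanFinrank K v s = #s := by
  rw [spanFinrank, Set.image_eq_range, finrank_span_eq_card hs]
  simp

lemma LinearIndepOn.card_le_spanFinrank (hs : LinearIndepOn K v s) (hst : s ⊆ t) :
    #s ≤ spanFinrank K v t :=
  hs.spanFinrank_eq_card ▸ spanFinrank_mono hst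

lemma LinearIndepOn.exists_extension_card_eq_spanFinrank (hs : LinearIndepOn K v s)
    (hst : s ⊆ t) : ∃ u, s ⊆ u ∧ u ⊆ t ∧ LinearIndepOn K v u ∧ #u = spanFinrank K v t := by
  obtain ⟨b, hbt, hsb, hspan, hb⟩ := exists_linearIndepOn_extension hs (coe_subset.mpr hst)
  obtain ⟨u, rfl⟩ := (t.finite_toSet.subset hbt).exists_finset_coe
  refine ⟨u, coe_subset.mp hsb, coe_subset.mp hbt, hb, ?_⟩
  have hspan_eq : Submodule.span K (v '' u) = Submodule.span K (v '' t) :=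
    le_antisymm (Submodule.span_mono (Set.image_mono hbt)) (Submodule.span_le.mpr hspan)
  rw [← hb.spanFinrank_eq_card, spanFinrank, spanFinrank, hspan_eq]

lemma exists_linearIndepOn_card_filter_lt_eq (A : Finset ι) (w : ι → ℕ) :
    ∃ I ⊆ A, LinearIndepOn K v I ∧
      ∀ j, #{e ∈ I | j < w e} = spanFinrank K v {e ∈ A | j < w e} := by
  suffices h : ∀ k c, A.sup w ≤ c + k → ∃ I ⊆ {e ∈ A | c < w e}, LinearIndepOn K v I ∧
      ∀ j, c ≤ j → #{e ∈ I | j < w e} = spanFinrank K v {e ∈ A | j < w e} by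
    obtain ⟨I, hIA, hI, hcard⟩ := h _ 0 le_add_self
    exact ⟨I, hIA.trans (filter_subset _ _), hI, fun j => hcard j j.zero_le⟩
  intro k
  induction k with
  | zero =>
    intro c hc
    refine ⟨∅, empty_subset _, by simp, fun j hj => ?_⟩
    have hempty : {e ∈ A | j < w e} = ∅ :=
      filter_false_of_mem fun e he => by have := le_sup (f := w) he; omega
    rw [hempty, filter_empty, card_empty, spanFinrank_empty]
  | succ k ih =>
    intro c hc
    obtain ⟨I, hIA, hI, hcard⟩ := ih (c + 1) (by omega)
    have hlevel : {e ∈ A | c + 1 < w e} ⊆ {e ∈ A | c < w e} :=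
      monotone_filter_right A fun e _ (h : c + 1 < w e) => by omega
    obtain ⟨u, hIu, huA, hu, hu_card⟩ := hI.exists_extension_card_eq_spanFinrank (hIA.trans hlevel)
    refine ⟨u, huA, hu, fun j hj => ?_⟩
    rcases hj.eq_or_lt with rfl | hj
    · rwa [filter_true_of_mem fun e he => (mem_filter.mp (huA he)).2]
    · refine le_antisymm ((hu.mono (filter_subset _ _)).card_le_spanFinrank
        (filter_subset_filter _ fun e he => (mem_filter.mp (huA he)).1)) ?_
      rw [← hcard j hj]
      exact card_le_card (filter_subset_filter _ hIu)

end SpanFinrank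

section WeightedRank

variable {ι K V : Type*} [Field K] [AddCommGroup V] [Module K V] {v : ι → V} {w : ι → ℕ}
  {A I : Finset ι} {W : ℕ}

lemma LinearIndepOn.sum_le_sum_range_spanFinrank (hI : LinearIndepOn K v I) (hIA : I ⊆ A)
    (hW : ∀ e ∈ A, w e ≤ W) :
    ∑ e ∈ I, w e ≤ ∑ j ∈ range W, spanFinrank K v {e ∈ A | j < w e} := by
  rw [sum_eq_sum_range_card_filter_lt I w W fun e he => hW e (hIA he)]
  exact sum_le_sum fun j _ =>
    (hI.mono (filter_subset _ _)).card_le_spanFinrank (filter_subset_filter _ hIA)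

lemma exists_linearIndepOn_sum_eq_sum_range_spanFinrank (hW : ∀ e ∈ A, w e ≤ W) :
    ∃ I ⊆ A, LinearIndepOn K v I ∧
      ∑ e ∈ I, w e = ∑ j ∈ range W, spanFinrank K v {e ∈ A | j < w e} := by
  obtain ⟨I, hIA, hI, hcard⟩ := exists_linearIndepOn_card_filter_lt_eq (K := K) (v := v) A w
  refine ⟨I, hIA, hI, ?_⟩
  rw [sum_eq_sum_range_card_filter_lt I w W fun e he => hW e (hIA he)]
  exact sum_congr rfl fun j _ => hcard j

end WeightedRank

lemma phiLin_eq_sum_range_spanFinrank {n m : ℕ} (v : Fin n → Fin m → ZMod 2) (w : Fin n → ℕ)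
    (A : Finset (Fin n)) (W : ℕ) (hW : ∀ e ∈ A, w e ≤ W) :
    phiLin v w A = ∑ j ∈ range W, (spanFinrank (ZMod 2) v {e ∈ A | j < w e} : ℝ) := by
  refine IsGreatest.csSup_eq ⟨?_, ?_⟩
  · obtain ⟨I, hIA, hI, hsum⟩ :=
      exists_linearIndepOn_sum_eq_sum_range_spanFinrank (K := ZMod 2) (v := v) hW
    exact ⟨I, hIA, hI, by exact_mod_cast hsum.symm⟩
  · rintro x ⟨I, hIA, hI, rfl⟩
    exact_mod_cast LinearIndepOn.sum_le_sum_range_spanFinrank hI hIA hW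

/-- Transposes an array whose row `a` has length `w a ≤ W` into its `W` columns. -/
def staircaseTransposeEquiv {α X : Type*} (w : α → ℕ) (W : ℕ) (hw : ∀ a, w a ≤ W) :
    (∀ a, Fin (w a) → X) ≃ (∀ j : Fin W, {a // (j : ℕ) < w a} → X) where
  toFun g j a := g a ⟨j, a.2⟩
  invFun h a i := h (Fin.castLE (hw a) i) ⟨a, i.2⟩
  left_inv _ := rfl
  right_inv _ := rfl

lemma Matrix.card_range_mulVec {m n K : Type*} [Fintype m] [Fintype n] [Field K] [Fintype K]
    (M : Matrix m n K) :
    Nat.card (Set.range M.mulVec) =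
      Fintype.card K ^ Module.finrank K (Submodule.span K (Set.range M)) := by
  rw [show Set.range M = Set.range M.row from rfl, ← Matrix.rank_eq_finrank_span_row, Matrix.rank,
    ← Module.card_eq_pow_finrank, ← Nat.card_eq_fintype_card]
  exact Nat.card_congr (Equiv.setCongr (by ext; simp))

section Construction

variable {ι κ K : Type*} [Fintype ι] [Fintype κ] [Field K] [Fintype K] (v : ι → κ → K)
  (w : ι → ℕ)

/-- On the sample space `(κ → K)^W`, `W = max w`, the variable attached to `e` reads the first
`w e` coordinates through the linear form `v e`. -/
noncomputable def layerForm (e : ι) : (Fin (univ.sup w) → κ → K) →ₗ[K] (Fin (w e) → K) where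
  toFun x j := v e ⬝ᵥ x (Fin.castLE (le_sup (mem_univ e)) j)
  map_add' x y := by ext; simp [dotProduct_add]
  map_smul' c x := by ext; simp [dotProduct_smul]

lemma card_range_layerForm (A : Finset ι) :
    Nat.card (Set.range fun x (e : A) => layerForm v w e x) =
      Fintype.card K ^ ∑ j ∈ range (univ.sup w), spanFinrank K v {e ∈ A | j < w e} := by
  let T := staircaseTransposeEquiv (X := K) (fun e : A => w e) (univ.sup w)
    fun e => le_sup (mem_univ e.1)
  let M : ∀ j : Fin (univ.sup w), Matrix {e : A // (j : ℕ) < w e} κ K := fun _ e => v e.1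
  have hT : T ∘ (fun x (e : A) => layerForm v w e x) = Pi.map fun j => (M j).mulVec := rfl
  have hM : ∀ j, Set.range (M j) = v '' {e ∈ A | (j : ℕ) < w e} := by
    intro j
    ext x
    simp only [M, Set.mem_range, Subtype.exists, Set.mem_image]
    aesop
  rw [← Nat.card_image_of_injective T.injective, ← Set.range_comp, hT, Set.range_piMap,
    Nat.card_congr (Equiv.Set.univPi _), Nat.card_pi,
    ← Fin.sum_univ_eq_sum_range (fun j => spanFinrank K v {e ∈ A | j < w e}),
    ← prod_pow_eq_pow_sum]
  refine prod_congr rfl fun j _ => ?_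
  rw [Matrix.card_range_mulVec, hM, spanFinrank, coe_filter]

end Construction

theorem weighted_rank_entropic (n m : ℕ) (v : Fin n → Fin m → ZMod 2) (w : Fin n → ℕ) :
    ∃ (N : ℕ) (p : Fin N → ℝ) (k : Fin n → ℕ) (Y : ∀ i : Fin n, Fin N → Fin (k i)),
      (∀ ω, 0 ≤ p ω) ∧ (∑ ω, p ω = 1) ∧
      ∀ A : Finset (Fin n), A.Nonempty →
        entH p (fun ω => fun e : A => Y e ω) = phiLin v w A := by
  let Ω := Fin (univ.sup w) → Fin m → ZMod 2
  obtain ⟨N, p, k, Y, hp0, hp1, hY⟩ := exists_fin_model (fun _ : Ω => (Fintype.card Ω : ℝ)⁻¹)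
    (fun _ => by positivity) (by simp) fun e x => layerForm v w e x
  refine ⟨N, p, k, Y, hp0, hp1, fun A _ => ?_⟩
  calc entH p (fun ω (e : A) => Y e ω)
      = logb 2 (Nat.card (Set.range fun x (e : A) => layerForm v w e x)) :=
        (hY A).trans (entH_uniform_eq_logb_card_range (LinearMap.pi fun e : A => layerForm v w e))
    _ = phiLin v w A := by
        rw [card_range_layerForm, phiLin_eq_sum_range_spanFinrank v w A _
          fun e _ => le_sup (mem_univ e), ZMod.card, Nat.cast_pow, logb_pow, Nat.cast_ofNat,
          logb_self_eq_one one_lt_two, mul_one, Nat.cast_sum]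
end

section
/- Let G = (V, E) be a connected graph with an orientation, k a positive integer, and for each vertex v let X_v be a uniform random variable on Z/kZ, all independent. For each directed edge e = (u,v), set Y_e = X_v − X_u (mod k). Then for every E' ⊆ E, H((Y_e)_{e∈E'}) = r(E')·log k, where r is the rank function of the graphic matroid (size of a maximum forest in E'). In particular, the constant-weight rank function with weight log k is entropic for graphic matroids. -/
open Classical Finset Real

/-- The signed (rational) incidence vector of a directed edge. -/
def sincVec {V : Type*} [DecidableEq V] (uv : V × V) : V → ℚ :=
  fun x => (if x = uv.2 then (1 : ℚ) else 0) - (if x = uv.1 then 1 else 0)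

/-- Rank of an edge set in the graphic matroid: size of a maximum forest, forests
being edge sets with linearly independent signed incidence vectors. -/
noncomputable def graphicRank {V : Type*} [DecidableEq V] {n : ℕ} (ends : Fin n → V × V)
    (E' : Finset (Fin n)) : ℕ :=
  (E'.powerset.filter (fun F => LinearIndependent ℚ (fun e : {x : Fin n // x ∈ F} => sincVec (ends e.1)))).sup
    Finset.card

/-!
The coboundary `δ : (V → ℤ/k) → (E' → ℤ/k)`, `δω(e) = ω(head e) - ω(tail e)`, is a group
homomorphism, so under the uniform distribution on `(ℤ/k)^V` the vector `Y = δX` is uniform on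
the image of `δ`, and `H(Y) = log (k^|V| / |ker δ|)`. A labelling lies in `ker δ` iff it is
constant on the connected components of `(V, E')`, so `|ker δ| = k^c` with `c` their number.
Over `ℚ` the same kernel computation gives the coboundary rank `|V| - c`, which is the row rank
of the incidence matrix, i.e. the largest size of an independent set of incidence vectors in
`E'`: the graphic rank `r(E')`. Hence `H(Y) = (|V| - c) log k = r(E') log k`.
-/

open Module Submodule

section Entropy

variable {Ω S : Type*} [Fintype Ω] [Fintype S]

lemma sum_Pr_fiber (p : Ω → ℝ) (f : Ω → S) :
    ∑ s, Pr p (fun ω => f ω = s) = ∑ ω, p ω := by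
  unfold Pr
  rw [Finset.sum_comm]
  refine Finset.sum_congr rfl fun ω _ => ?_
  simp

lemma Pr_uniform (E : Ω → Prop) :
    Pr (fun _ => 1 / (Fintype.card Ω : ℝ)) E = #{ω | E ω} / Fintype.card Ω := by
  rw [Pr, Finset.sum_ite, Finset.sum_const_zero, add_zero, Finset.sum_const, nsmul_eq_mul,
    mul_one_div]

lemma entH_eq_neg_logb_of_Pr_fiber (p : Ω → ℝ) (f : Ω → S) (hp : ∑ ω, p ω = 1) (q : ℝ)
    (hq : ∀ s, Pr p (fun ω => f ω = s) = 0 ∨ Pr p (fun ω => f ω = s) = q) :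
    entH p f = -Real.logb 2 q := by
  have hterm : ∀ s, Pr p (fun ω => f ω = s) * Real.logb 2 (Pr p (fun ω => f ω = s)) =
      Pr p (fun ω => f ω = s) * Real.logb 2 q := by
    intro s
    rcases hq s with h | h <;> rw [h]
    simp
  rw [entH, Finset.sum_congr rfl fun s _ => hterm s, ← Finset.sum_mul, sum_Pr_fiber, hp, one_mul]

end Entropy

lemma entH_uniform_addMonoidHom {G H : Type*} [AddGroup G] [Fintype G] [AddMonoid H] [Fintype H]
    (f : G →+ H) :
    entH (fun _ => 1 / (Fintype.card G : ℝ)) f =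
      Real.logb 2 (Fintype.card G / Nat.card f.ker) := by
  have hfiber_zero : #{g | f g = 0} = Nat.card f.ker := by
    rw [← Fintype.card_subtype, ← Nat.card_eq_fintype_card]
    rfl
  have hunif : ∑ _g : G, 1 / (Fintype.card G : ℝ) = 1 := by
    rw [Finset.sum_const, nsmul_eq_mul, Finset.card_univ, mul_one_div_cancel]
    exact_mod_cast Fintype.card_ne_zero
  rw [entH_eq_neg_logb_of_Pr_fiber _ f hunif (Nat.card f.ker / Fintype.card G), ← Real.logb_inv,
    inv_div]
  intro s
  by_cases hs : s ∈ Set.range f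
  · right
    rw [Pr_uniform, AddMonoidHom.card_fiber_eq_of_mem_range f hs ⟨0, map_zero f⟩, hfiber_zero]
  · left
    rw [Pr_uniform, Finset.card_eq_zero.mpr, Nat.cast_zero, zero_div]
    exact Finset.filter_eq_empty_iff.mpr fun g _ hg => hs ⟨g, hg⟩

section Coboundary

variable {V ι : Type*}

def coboundary (R : Type*) [Ring R] (ends : ι → V × V) : (V → R) →ₗ[R] (ι → R) where
  toFun ω e := ω (ends e).2 - ω (ends e).1
  map_add' ω ω' := by
    ext e
    simp only [Pi.add_apply]
    abel
  map_smul' c ω := by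
    ext e
    simp [mul_sub]

-- `Quot` passes to the equivalence closure, so these are the connected components.
abbrev EdgeComponents (ends : ι → V × V) : Type _ := Quot fun a b => ∃ e, ends e = (a, b)

def coboundaryKerEquiv (R : Type*) [Ring R] (ends : ι → V × V) :
    LinearMap.ker (coboundary R ends) ≃ₗ[R] (EdgeComponents ends → R) where
  toFun ω := Quot.lift ω.1 <| by
    rintro a b ⟨e, he⟩
    have h := congrFun (LinearMap.mem_ker.mp ω.2) e
    simp only [coboundary, LinearMap.coe_mk, AddHom.coe_mk, he, Pi.zero_apply, sub_eq_zero] at h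
    exact h.symm
  invFun g := ⟨fun v => g (Quot.mk _ v), by
    ext e
    have hlink : Quot.mk (fun a b => ∃ e, ends e = (a, b)) (ends e).1 = Quot.mk _ (ends e).2 :=
      Quot.sound ⟨e, rfl⟩
    simp [coboundary, hlink]⟩
  map_add' _ _ := by
    ext q
    induction q using Quot.ind
    rfl
  map_smul' _ _ := by
    ext q
    induction q using Quot.ind
    rfl
  left_inv _ := rfl
  right_inv g := by
    ext q
    induction q using Quot.ind
    rfl

lemma card_ker_coboundary (R : Type*) [Ring R] [Finite V] (ends : ι → V × V) :
    Nat.card (LinearMap.ker (coboundary R ends)) = Nat.card R ^ Nat.card (EdgeComponents ends) := by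
  rw [Nat.card_congr (coboundaryKerEquiv R ends).toEquiv, Nat.card_fun]

lemma finrank_ker_coboundary (K : Type*) [Field K] [Finite V] (ends : ι → V × V) :
    finrank K (LinearMap.ker (coboundary K ends)) = Nat.card (EdgeComponents ends) := by
  cases nonempty_fintype (EdgeComponents ends)
  rw [(coboundaryKerEquiv K ends).finrank_eq, Module.finrank_fintype_fun_eq_card,
    Nat.card_eq_fintype_card]

end Coboundary

lemma sup_card_linearIndependent_eq_finrank_span {K M ι : Type*} [Field K] [AddCommGroup M]
    [Module K M] (v : ι → M) (s : Finset ι) :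
    (s.powerset.filter fun F => LinearIndependent K (fun e : {x // x ∈ F} => v e)).sup
        Finset.card = finrank K (span K (v '' s)) := by
  have := FiniteDimensional.span_of_finite K (s.finite_toSet.image v)
  apply le_antisymm
  · refine Finset.sup_le fun F hF => ?_
    obtain ⟨hFs, hFind⟩ := Finset.mem_filter.mp hF
    calc F.card = finrank K (span K (Set.range fun e : F => v e)) := by
          rw [finrank_span_eq_card hFind, Fintype.card_coe]
      _ ≤ finrank K (span K (v '' s)) := by
          refine Submodule.finrank_mono (span_mono ?_)
          rintro _ ⟨e, rfl⟩
          exact ⟨e, Finset.mem_powerset.mp hFs e.2, rfl⟩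
  · obtain ⟨b, hbs, -, hspan, hind⟩ :=
      exists_linearIndepOn_extension (linearIndepOn_empty K v) (Set.empty_subset (s : Set ι))
    lift b to Finset ι using s.finite_toSet.subset hbs
    have hbF : b ∈ s.powerset.filter fun F => LinearIndependent K (fun e : {x // x ∈ F} => v e) :=
      Finset.mem_filter.mpr ⟨Finset.mem_powerset.mpr (by simpa using hbs), hind⟩
    calc finrank K (span K (v '' s)) = finrank K (span K (v '' b)) := by
          rw [le_antisymm (span_le.mpr hspan) (span_mono (Set.image_mono hbs))]
      _ = b.card := by
          rw [Set.image_eq_range]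
          exact (finrank_span_eq_card hind).trans (Fintype.card_coe b)
      _ ≤ _ := Finset.le_sup hbF

lemma graphicRank_eq_finrank_span {V : Type*} [DecidableEq V] {n : ℕ} (ends : Fin n → V × V)
    (E' : Finset (Fin n)) :
    graphicRank ends E' = finrank ℚ (span ℚ (Set.range fun e : E' => sincVec (ends e))) := by
  rw [graphicRank, sup_card_linearIndependent_eq_finrank_span (fun e => sincVec (ends e)),
    Set.image_eq_range]
  rfl

/-- The rows of the incidence matrix span a space of dimension its column rank, the rank of the
coboundary map. -/
lemma finrank_span_sincVec_add_card_edgeComponents {V ι : Type*} [Fintype V] [DecidableEq V]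
    [Finite ι] (ends : ι → V × V) :
    finrank ℚ (span ℚ (Set.range fun e => sincVec (ends e))) + Nat.card (EdgeComponents ends) =
      Fintype.card V := by
  let A : Matrix ι V ℚ := fun e => sincVec (ends e)
  have hA : A.mulVecLin = coboundary ℚ ends := by
    refine LinearMap.ext fun ω => funext fun e => ?_
    change A.mulVec ω e = ω (ends e).2 - ω (ends e).1
    simp [A, Matrix.mulVec, dotProduct, sincVec, sub_mul, Finset.sum_sub_distrib]
  have h := LinearMap.finrank_range_add_finrank_ker (coboundary ℚ ends)
  rwa [finrank_fintype_fun_eq_card, finrank_ker_coboundary, ← hA, ← Matrix.rank,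
    Matrix.rank_eq_finrank_span_row] at h

lemma graphicRank_add_card_edgeComponents {V : Type*} [Fintype V] [DecidableEq V] {n : ℕ}
    (ends : Fin n → V × V) (E' : Finset (Fin n)) :
    graphicRank ends E' + Nat.card (EdgeComponents fun e : E' => ends e) = Fintype.card V := by
  rw [graphicRank_eq_finrank_span]
  exact finrank_span_sincVec_add_card_edgeComponents _

theorem graphic_constant_weight_entropic_general {V : Type*} [Fintype V] [DecidableEq V]
    (n : ℕ) (ends : Fin n → V × V)
    (k : ℕ) [NeZero k] :
    ∀ E' : Finset (Fin n),
      entH (fun _ : V → ZMod k => (1 : ℝ) / (k : ℝ) ^ Fintype.card V)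
          (fun ω => fun e : E' => ω (ends e.1).2 - ω (ends e.1).1) =
        (graphicRank ends E' : ℝ) * Real.logb 2 k := by
  intro E'
  set δ := coboundary (ZMod k) fun e : E' => ends e
  set c := Nat.card (EdgeComponents fun e : E' => ends e)
  have hrank : graphicRank ends E' + c = Fintype.card V := graphicRank_add_card_edgeComponents ..
  have hker : Nat.card δ.toAddMonoidHom.ker = k ^ c := by
    rw [← LinearMap.ker_toAddSubgroup]
    exact (card_ker_coboundary (ZMod k) _).trans (by rw [Nat.card_zmod])
  have hcard : ((Fintype.card (V → ZMod k) : ℕ) : ℝ) = (k : ℝ) ^ Fintype.card V := by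
    simp
  rw [← hcard]
  change entH _ δ.toAddMonoidHom = _
  rw [entH_uniform_addMonoidHom, hker, hcard, ← hrank]
  push_cast
  rw [pow_add, mul_div_cancel_right₀ _ (by simp [NeZero.ne k]), Real.logb_pow]

theorem graphic_constant_weight_entropic {V : Type*} [Fintype V] [DecidableEq V]
    (n : ℕ) (ends : Fin n → V × V)
    (hconn : ∀ u v : V,
      Relation.ReflTransGen (fun a b => ∃ e, ends e = (a, b) ∨ ends e = (b, a)) u v)
    (k : ℕ) [NeZero k] :
    ∀ E' : Finset (Fin n),
      entH (fun _ : V → ZMod k => (1 : ℝ) / (k : ℝ) ^ Fintype.card V)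
          (fun ω => fun e : E' => ω (ends e.1).2 - ω (ends e.1).1) =
        (graphicRank ends E' : ℝ) * Real.logb 2 k :=
  graphic_constant_weight_entropic_general n ends k
end
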